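/- Let p ≥ 3 be a real number, q ≥ 3 a real number, and n, k integers with n ≥ 2k ≥ 2. Then (1 - q^{-n})(1 - q^{-n+2k}) / ((1 - q^{-k})(1 - q^{-n+k})) + q^{-n+2k} < 3. -/
import Mathlib


/-- Key inequality in the proof that `d = q^{n-2k}·p^{-i}` with `i ≥ 0`:
for real `p ≥ 3`, `q ≥ 3` and integers `n ≥ 2k`, `k ≥ 1`,
`(1-q^{-n})(1-q^{-n+2k}) / ((1-q^{-k})(1-q^{-n+k})) + q^{-n+2k} < 3`. -/
theorem stmt8 (p q : ℝ) (hp : 3 ≤ p) (hq : 3 ≤ q) (n k : ℕ)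
    (hk : 1 ≤ k) (hn : 2 * k ≤ n) :
    (1 - q ^ (-(n : ℤ))) * (1 - q ^ (-(n : ℤ) + 2 * (k : ℤ))) /
      ((1 - q ^ (-(k : ℤ))) * (1 - q ^ (-(n : ℤ) + (k : ℤ))))
      + q ^ (-(n : ℤ) + 2 * (k : ℤ)) < 3 := by
  have hq0 : (0:ℝ) < q := by linarith
  have hq0' : q ≠ 0 := ne_of_gt hq0
  have hq1 : (1:ℝ) ≤ q := by linarith
  set x : ℝ := q ^ (-(k : ℤ)) with hxdef
  set z : ℝ := q ^ (-(n : ℤ) + 2 * (k : ℤ)) with hzdef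
  have hx0 : 0 < x := zpow_pos hq0 _
  have hz0 : 0 < z := zpow_pos hq0 _
  have hx3 : x ≤ 1/3 := by
    have h1 : x ≤ q ^ (-1 : ℤ) := by
      apply zpow_le_zpow_right₀ hq1
      omega
    have : q ^ (-1 : ℤ) = q⁻¹ := by simp
    rw [this] at h1
    have : q⁻¹ ≤ 1/3 := by
      rw [inv_le_comm₀ hq0 (by norm_num)]
      linarith
    linarith
  have hz1 : z ≤ 1 := by
    have : z ≤ q ^ (0 : ℤ) := by
      apply zpow_le_zpow_right₀ hq1
      omega
    simpa using this
  have hn' : q ^ (-(n : ℤ)) = x * x * z := by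
    rw [hxdef, hzdef, ← zpow_add₀ hq0', ← zpow_add₀ hq0']
    ring_nf
  have hnk : q ^ (-(n : ℤ) + (k : ℤ)) = x * z := by
    rw [hxdef, hzdef, ← zpow_add₀ hq0']
    ring_nf
  rw [hn', hnk]
  have hd1 : 0 < 1 - x := by linarith
  have hd2 : 0 < 1 - x * z := by nlinarith
  have hD : 0 < (1 - x) * (1 - x * z) := mul_pos hd1 hd2
  rw [div_add' _ _ _ (ne_of_gt hD), div_lt_iff₀ hD]
  nlinarith [mul_pos hx0 hz0, mul_nonneg (mul_nonneg hx0.le hz0.le) hz0.le,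
    mul_nonneg (mul_nonneg hx0.le hx0.le) hz0.le, sq_nonneg (x*z), sq_nonneg (1-z),
    mul_nonneg (mul_nonneg hx0.le hx0.le) (mul_nonneg hz0.le hz0.le)]
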